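/- Let q be any prime power and F = GF(q). Let W be the 4-dimensional subspace of quadratic forms over F spanned by X0X2, X1^2, X1X2 and X2^2 (the web of conics associated with the line-orbit o_6). Then among the conics of W there are exactly q+1 double lines, exactly (3q^2+q)/2 pairs of real lines, exactly (q^2−q)/2 pairs of imaginary lines, and exactly q^3−q^2 nonsingular conics. -/

import Mathlib

/-!
A nonzero form of the web is `a₂X₀X₂ + a₃X₁² + a₄X₁X₂ + a₅X₂²`, with discriminant `-a₃a₂²`.
Scaling its first nonzero coefficient to `1` picks one vector on each conic, in one of four
families: `X₀X₂ + yX₁² + zX₁X₂ + wX₂²` (nonsingular iff `y ≠ 0`, otherwise `X₂ · (X₀ + zX₁ + wX₂)`),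
the monic binary forms `X₁² + zX₁X₂ + wX₂²`, `X₂ · (X₁ + wX₂)` and `X₂²`. The binary form
factors iff `(z, w) = (r + t, rt)`, and this parametrisation by unordered pairs `{r, t}` is
injective; it is a double line iff `r = t`. Counting `q` diagonal and `q(q-1)/2` off-diagonal
pairs among the `q(q+1)/2` elements of `Sym2 F` gives the four numbers.

The four types are told apart without reference to the characteristic: a product `l₁ · l₂` is a
double line iff `l₁ ⨯₃ l₂ = 0`, and the squares of the coordinates of `l₁ ⨯₃ l₂` are
the discriminants of the form restricted to the three coordinate lines.
-/

open Matrix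

namespace Conics

/-- Coefficient vector (a0,...,a5) of the product of two linear forms
`(b0*X0+b1*X1+b2*X2)*(c0*X0+c1*X1+c2*X2)`, where the quadratic form with
coefficient vector `a` is `a0*X0^2 + a1*X0*X1 + a2*X0*X2 + a3*X1^2 + a4*X1*X2 + a5*X2^2`. -/
def mulLin {F : Type} [Field F] (b c : Fin 3 → F) : Fin 6 → F :=
  ![b 0 * c 0, b 0 * c 1 + b 1 * c 0, b 0 * c 2 + b 2 * c 0,
    b 1 * c 1, b 1 * c 2 + b 2 * c 1, b 2 * c 2]

/-- The discriminant of the quadratic form with coefficient vector `a`. -/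
def disc {F : Type} [Field F] (a : Fin 6 → F) : F :=
  4 * a 0 * a 3 * a 5 + a 1 * a 2 * a 4 - a 0 * a 4 ^ 2 - a 3 * a 2 ^ 2 - a 5 * a 1 ^ 2

/-- `f_a` is a double line: `f_a = c * l^2` for a nonzero scalar `c` and nonzero linear form `l`. -/
def IsDoubleLine {F : Type} [Field F] (a : Fin 6 → F) : Prop :=
  ∃ (c : F) (l : Fin 3 → F), c ≠ 0 ∧ l ≠ 0 ∧ a = c • mulLin l l

/-- `f_a` is a pair of (distinct) real lines: `f_a = l1 * l2` with neither linear form a scalar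
multiple of the other. -/
def IsRealPair {F : Type} [Field F] (a : Fin 6 → F) : Prop :=
  ∃ l1 l2 : Fin 3 → F, (¬ ∃ t : F, l2 = t • l1) ∧ (¬ ∃ t : F, l1 = t • l2) ∧ a = mulLin l1 l2

/-- `f_a` is a pair of conjugate imaginary lines: singular, but not a product of two linear
forms over `F`. -/
def IsImagPair {F : Type} [Field F] (a : Fin 6 → F) : Prop :=
  disc a = 0 ∧ ¬ ∃ l1 l2 : Fin 3 → F, a = mulLin l1 l2

/-- `f_a` is a nonsingular conic. -/
def IsNonsingular {F : Type} [Field F] (a : Fin 6 → F) : Prop :=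
  disc a ≠ 0

/-- The number of conics of a given type `T` in a linear system `W` (a subspace of the space of
quadratic forms, identified with `F^6`): the number of 1-dimensional subspaces `⟨a⟩` of `W`,
`a ≠ 0`, such that `f_a` has type `T`. -/
noncomputable def numConics {F : Type} [Field F] (W : Submodule F (Fin 6 → F))
    (T : (Fin 6 → F) → Prop) : ℕ :=
  Set.ncard {P : Submodule F (Fin 6 → F) |
    ∃ a : Fin 6 → F, a ≠ 0 ∧ a ∈ W ∧ T a ∧ P = Submodule.span F {a}}

/-- The symmetric 3×3 matrix associated with a point `y` of `PG(5,q)`. -/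
def M {F : Type} [Field F] (y : Fin 6 → F) : Matrix (Fin 3) (Fin 3) F :=
  !![y 0, y 1, y 2; y 1, y 3, y 4; y 2, y 4, y 5]

/-- The pairing `B(a,y) = a0*y0 + ... + a5*y5`. -/
def Bform {F : Type} [Field F] (a y : Fin 6 → F) : F :=
  a 0 * y 0 + a 1 * y 1 + a 2 * y 2 + a 3 * y 3 + a 4 * y 4 + a 5 * y 5

/-- The squab of conics associated with a (nonzero) point `y`: the hyperplane
`{a : B(a,y) = 0}` of the space of quadratic forms. -/
def squab {F : Type} [Field F] (y : Fin 6 → F) : Submodule F (Fin 6 → F) where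
  carrier := {a | Bform a y = 0}
  add_mem' := by
    intro a b ha hb
    simp only [Set.mem_setOf_eq, Bform, Pi.add_apply] at *
    linear_combination ha + hb
  zero_mem' := by simp [Bform]
  smul_mem' := by
    intro c a ha
    simp only [Set.mem_setOf_eq, Bform, Pi.smul_apply, smul_eq_mul] at *
    linear_combination c * ha

variable {F : Type} [Field F]

lemma mulLin_smul_left (t : F) (b c : Fin 3 → F) : mulLin (t • b) c = t • mulLin b c := by
  ext i; fin_cases i <;> simp [mulLin, mul_add, mul_assoc]

lemma mulLin_smul_right (t : F) (b c : Fin 3 → F) : mulLin b (t • c) = t • mulLin b c := by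
  ext i; fin_cases i <;> simp [mulLin, mul_add, mul_left_comm]

lemma mulLin_zero_left (c : Fin 3 → F) : mulLin 0 c = 0 := by
  simpa using mulLin_smul_left (0 : F) 0 c

lemma disc_mulLin (b c : Fin 3 → F) : disc (mulLin b c) = 0 := by
  simp only [disc, mulLin, cons_val]
  ring

lemma disc_smul (t : F) (a : Fin 6 → F) : disc (t • a) = t ^ 3 * disc a := by
  simp only [disc, Pi.smul_apply, smul_eq_mul]; ring

/-- The discriminants of `f_a` restricted to the coordinate lines `X₀ = 0`, `X₁ = 0`, `X₂ = 0`. -/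
def lineDiscs (a : Fin 6 → F) : Fin 3 → F :=
  ![a 4 ^ 2 - 4 * a 3 * a 5, a 2 ^ 2 - 4 * a 0 * a 5, a 1 ^ 2 - 4 * a 0 * a 3]

lemma lineDiscs_mulLin (b c : Fin 3 → F) : lineDiscs (mulLin b c) = (b ⨯₃ c) ^ 2 := by
  ext i
  fin_cases i <;>
    simp only [lineDiscs, mulLin, cross_apply, Pi.pow_apply, Fin.zero_eta, Fin.mk_one,
      Fin.reduceFinMk, cons_val] <;>
    ring

lemma lineDiscs_smul (t : F) (a : Fin 6 → F) : lineDiscs (t • a) = t ^ 2 • lineDiscs a := by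
  ext i
  fin_cases i <;>
    simp only [lineDiscs, Pi.smul_apply, smul_eq_mul, Fin.zero_eta, Fin.mk_one, Fin.reduceFinMk,
      cons_val] <;>
    ring

lemma lineDiscs_mulLin_eq_zero_iff (b c : Fin 3 → F) :
    lineDiscs (mulLin b c) = 0 ↔ b ⨯₃ c = 0 := by
  simp [lineDiscs_mulLin, funext_iff]

lemma not_proportional_iff_cross_ne_zero (b c : Fin 3 → F) :
    ((¬ ∃ t : F, c = t • b) ∧ (¬ ∃ t : F, b = t • c)) ↔ b ⨯₃ c ≠ 0 := by
  rw [crossProduct_ne_zero_iff_linearIndependent]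
  constructor
  · rintro ⟨hcb, hbc⟩
    have hb : b ≠ 0 := fun hb => hbc ⟨0, by simp [hb]⟩
    exact (LinearIndependent.pair_iff' hb).2 fun t h => hcb ⟨t, h.symm⟩
  · intro h
    have no_multiple : ∀ {u v : Fin 3 → F}, LinearIndependent F ![u, v] → ¬ ∃ t : F, v = t • u :=
      fun h ⟨t, ht⟩ => (LinearIndependent.pair_iff' (by simpa using h.ne_zero 0)).1 h t ht.symm
    exact ⟨no_multiple h, no_multiple (LinearIndependent.pair_symm_iff.1 h)⟩

def IsProduct (a : Fin 6 → F) : Prop :=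
  ∃ b c : Fin 3 → F, a = mulLin b c

lemma isProduct_smul_iff {t : F} (ht : t ≠ 0) (a : Fin 6 → F) :
    IsProduct (t • a) ↔ IsProduct a := by
  constructor
  · rintro ⟨b, c, h⟩
    exact ⟨t⁻¹ • b, c, by rw [mulLin_smul_left, ← h, inv_smul_smul₀ ht]⟩
  · rintro ⟨b, c, rfl⟩
    exact ⟨t • b, c, (mulLin_smul_left t b c).symm⟩

lemma isDoubleLine_iff {a : Fin 6 → F} (ha : a ≠ 0) :
    IsDoubleLine a ↔ IsProduct a ∧ lineDiscs a = 0 := by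
  constructor
  · rintro ⟨t, l, -, -, rfl⟩
    rw [← mulLin_smul_left, lineDiscs_mulLin_eq_zero_iff, LinearMap.map_smul₂, cross_self,
      smul_zero]
    exact ⟨⟨t • l, l, rfl⟩, rfl⟩
  · rintro ⟨⟨b, c, rfl⟩, h⟩
    have hb : b ≠ 0 := by rintro rfl; exact ha (mulLin_zero_left c)
    rw [lineDiscs_mulLin_eq_zero_iff, ← not_ne_iff, crossProduct_ne_zero_iff_linearIndependent,
      LinearIndependent.pair_iff' hb] at h
    push Not at h
    obtain ⟨t, rfl⟩ := h
    rw [mulLin_smul_right] at ha ⊢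
    exact ⟨t, b, left_ne_zero_of_smul ha, hb, rfl⟩

lemma isRealPair_iff {a : Fin 6 → F} : IsRealPair a ↔ IsProduct a ∧ lineDiscs a ≠ 0 := by
  constructor
  · rintro ⟨b, c, hcb, hbc, rfl⟩
    rw [Ne, lineDiscs_mulLin_eq_zero_iff, ← Ne, ← not_proportional_iff_cross_ne_zero]
    exact ⟨⟨b, c, rfl⟩, hcb, hbc⟩
  · rintro ⟨⟨b, c, rfl⟩, h⟩
    rw [Ne, lineDiscs_mulLin_eq_zero_iff, ← Ne, ← not_proportional_iff_cross_ne_zero] at h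
    exact ⟨b, c, h.1, h.2, rfl⟩

inductive ConicType
  | doubleLine
  | realPair
  | imagPair
  | nonsingular

def ConicType.Holds : ConicType → (Fin 6 → F) → Prop
  | .doubleLine => IsDoubleLine
  | .realPair => IsRealPair
  | .imagPair => IsImagPair
  | .nonsingular => IsNonsingular

open Classical in
noncomputable def conicType (a : Fin 6 → F) : ConicType :=
  if IsProduct a then
    if lineDiscs a = 0 then .doubleLine else .realPair
  else
    if disc a = 0 then .imagPair else .nonsingular

lemma conicType_eq_doubleLine_iff {a : Fin 6 → F} :
    conicType a = .doubleLine ↔ IsProduct a ∧ lineDiscs a = 0 := by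
  unfold conicType; split_ifs <;> simp_all

lemma conicType_eq_realPair_iff {a : Fin 6 → F} :
    conicType a = .realPair ↔ IsProduct a ∧ lineDiscs a ≠ 0 := by
  unfold conicType; split_ifs <;> simp_all

lemma conicType_eq_imagPair_iff {a : Fin 6 → F} :
    conicType a = .imagPair ↔ disc a = 0 ∧ ¬ IsProduct a := by
  unfold conicType; split_ifs <;> simp_all

lemma conicType_eq_nonsingular_iff {a : Fin 6 → F} : conicType a = .nonsingular ↔ disc a ≠ 0 := by
  have hdisc : IsProduct a → disc a = 0 := by rintro ⟨b, c, rfl⟩; exact disc_mulLin b c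
  unfold conicType; split_ifs <;> simp_all

theorem holds_iff_conicType_eq {a : Fin 6 → F} (ha : a ≠ 0) (τ : ConicType) :
    τ.Holds a ↔ conicType a = τ := by
  cases τ
  · exact (isDoubleLine_iff ha).trans conicType_eq_doubleLine_iff.symm
  · exact isRealPair_iff.trans conicType_eq_realPair_iff.symm
  · exact conicType_eq_imagPair_iff.symm
  · exact conicType_eq_nonsingular_iff.symm

lemma conicType_smul {t : F} (ht : t ≠ 0) (a : Fin 6 → F) : conicType (t • a) = conicType a := by
  have hlines : lineDiscs (t • a) = 0 ↔ lineDiscs a = 0 := by simp [lineDiscs_smul, ht]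
  have hdisc : disc (t • a) = 0 ↔ disc a = 0 := by simp [disc_smul, ht]
  unfold conicType
  split_ifs <;> simp_all [isProduct_smul_iff ht]

lemma conicType_mulLin_of_cross_eq_zero {b c : Fin 3 → F} (h : b ⨯₃ c = 0) :
    conicType (mulLin b c) = .doubleLine :=
  conicType_eq_doubleLine_iff.2 ⟨⟨b, c, rfl⟩, (lineDiscs_mulLin_eq_zero_iff b c).2 h⟩

lemma conicType_mulLin_of_cross_ne_zero {b c : Fin 3 → F} (h : b ⨯₃ c ≠ 0) :
    conicType (mulLin b c) = .realPair :=
  conicType_eq_realPair_iff.2 ⟨⟨b, c, rfl⟩, (lineDiscs_mulLin_eq_zero_iff b c).not.2 h⟩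

lemma numConics_congr (W : Submodule F (Fin 6 → F)) {T T' : (Fin 6 → F) → Prop}
    (h : ∀ a ∈ W, a ≠ 0 → (T a ↔ T' a)) : numConics W T = numConics W T' := by
  unfold numConics
  congr 1
  ext P
  constructor <;> rintro ⟨a, ha, haW, hT, rfl⟩
  exacts [⟨a, ha, haW, (h a haW ha).1 hT, rfl⟩, ⟨a, ha, haW, (h a haW ha).2 hT, rfl⟩]

theorem numConics_eq_card {ι : Type*} (W : Submodule F (Fin 6 → F)) {T : (Fin 6 → F) → Prop}
    (hT : ∀ (t : F) (a : Fin 6 → F), t ≠ 0 → (T (t • a) ↔ T a)) (rep : ι → Fin 6 → F)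
    (hrep : ∀ i, rep i ∈ W ∧ rep i ≠ 0) (hunique : ∀ a ∈ W, a ≠ 0 → ∃! i, ∃ t : F, a = t • rep i) :
    numConics W T = Nat.card {i // T (rep i)} := by
  have hinj : Function.Injective fun i => Submodule.span F {rep i} := by
    intro i j hij
    have hmem : rep i ∈ Submodule.span F {rep j} := by
      rw [← show Submodule.span F {rep i} = Submodule.span F {rep j} from hij]
      exact Submodule.mem_span_singleton_self _
    obtain ⟨t, ht⟩ := Submodule.mem_span_singleton.1 hmem
    exact (hunique _ (hrep i).1 (hrep i).2).unique ⟨1, (one_smul F _).symm⟩ ⟨t, ht.symm⟩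
  have himage : {P : Submodule F (Fin 6 → F) |
      ∃ a, a ≠ 0 ∧ a ∈ W ∧ T a ∧ P = Submodule.span F {a}} =
      (fun i => Submodule.span F {rep i}) '' {i | T (rep i)} := by
    ext P
    constructor
    · rintro ⟨a, ha, haW, hTa, rfl⟩
      obtain ⟨i, ⟨t, rfl⟩, -⟩ := hunique a haW ha
      have ht : t ≠ 0 := left_ne_zero_of_smul ha
      exact ⟨i, (hT t _ ht).1 hTa, (Submodule.span_singleton_smul_eq ht.isUnit _).symm⟩
    · rintro ⟨i, hi, rfl⟩
      exact ⟨rep i, (hrep i).2, (hrep i).1, hi, rfl⟩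
  rw [numConics, himage, Set.ncard_image_of_injective _ hinj, ← Nat.card_coe_set_eq]
  rfl

lemma card_subtype_sum {α β : Type*} [Finite α] [Finite β] (p : α ⊕ β → Prop) :
    Nat.card {x // p x} = Nat.card {a // p (.inl a)} + Nat.card {b // p (.inr b)} := by
  rw [Nat.card_congr Equiv.subtypeSum, Nat.card_sum]

lemma card_subtype_fst {α β : Type*} (p : α → Prop) :
    Nat.card {x : α × β // p x.1} = Nat.card {a // p a} * Nat.card β := by
  rw [Nat.card_congr Equiv.prodSubtypeFstEquivSubtypeProd, Nat.card_prod]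

lemma card_subtype_comp_of_injective {α β : Type*} {f : α → β} (hf : f.Injective) {p : β → Prop}
    (hp : ∀ b, p b → b ∈ Set.range f) : Nat.card {b // p b} = Nat.card {a // p (f a)} := by
  refine (Nat.card_eq_of_bijective (fun a => ⟨f a, a.2⟩) ⟨fun a a' h => ?_, fun b => ?_⟩).symm
  · exact Subtype.ext (hf (congrArg Subtype.val h))
  · obtain ⟨a, ha⟩ := hp b.1 b.2
    exact ⟨⟨a, ha ▸ b.2⟩, Subtype.ext ha⟩

lemma card_not_mem_range {α β : Type*} [Finite β] {f : α → β} (hf : f.Injective) :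
    Nat.card {b // b ∉ Set.range f} = Nat.card β - Nat.card α := by
  rw [← Set.ncard_range_of_injective hf, ← Set.ncard_compl]
  rfl

lemma card_subtype_ne {α : Type*} [Finite α] (a : α) :
    Nat.card {x // x ≠ a} = Nat.card α - 1 := by
  have h := Set.ncard_compl ({a} : Set α)
  rwa [Set.ncard_singleton] at h

lemma card_sym2_isDiag {α : Type*} [Fintype α] :
    Nat.card {s : Sym2 α // s.IsDiag} = Fintype.card α := by
  classical
  rw [Nat.card_eq_fintype_card, Sym2.card_subtype_diag]

lemma card_sym2_not_isDiag {α : Type*} [Fintype α] :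
    Nat.card {s : Sym2 α // ¬ s.IsDiag} = (Fintype.card α).choose 2 := by
  classical
  rw [Nat.card_eq_fintype_card, Sym2.card_subtype_not_diag]

lemma choose_two_succ (q : ℕ) : (q + 1).choose 2 = q.choose 2 + q := by
  rw [Nat.choose_succ_succ, Nat.choose_one_right, add_comm]

lemma two_mul_choose_two_add (q : ℕ) : 2 * q.choose 2 + q = q ^ 2 := by
  induction q with
  | zero => rfl
  | succ n ih =>
    rw [choose_two_succ]
    nlinarith [ih]

def vieta : Sym2 F → F × F :=
  Sym2.lift ⟨fun r t => (r + t, r * t), fun r t => Prod.ext (add_comm r t) (mul_comm r t)⟩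

@[simp] lemma vieta_mk (r t : F) : vieta s(r, t) = (r + t, r * t) := rfl

lemma vieta_injective : Function.Injective (vieta (F := F)) := by
  intro s s' h
  induction s using Sym2.ind with | _ r t => ?_
  induction s' using Sym2.ind with | _ r' t' => ?_
  simp only [vieta_mk, Prod.mk.injEq] at h
  have hroot : (r' - r) * (r' - t) = 0 := by linear_combination -r' * h.1 + h.2
  rcases mul_eq_zero.1 hroot with hr | hr
  · obtain rfl : r' = r := sub_eq_zero.1 hr
    obtain rfl : t' = t := by linear_combination -h.1
    rfl
  · obtain rfl : r' = t := sub_eq_zero.1 hr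
    obtain rfl : t' = r := by linear_combination -h.1
    exact Sym2.eq_swap

lemma mem_span_o6_iff (a : Fin 6 → F) :
    a ∈ Submodule.span F ({![0, 0, 1, 0, 0, 0], ![0, 0, 0, 1, 0, 0],
      ![0, 0, 0, 0, 1, 0], ![0, 0, 0, 0, 0, 1]} : Set (Fin 6 → F)) ↔ a 0 = 0 ∧ a 1 = 0 := by
  constructor
  · intro h
    have hgens : ({![0, 0, 1, 0, 0, 0], ![0, 0, 0, 1, 0, 0], ![0, 0, 0, 0, 1, 0],
        ![0, 0, 0, 0, 0, 1]} : Set (Fin 6 → F)) ⊆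
        ↑(LinearMap.ker (LinearMap.proj 0 : (Fin 6 → F) →ₗ[F] F) ⊓
          LinearMap.ker (LinearMap.proj 1 : (Fin 6 → F) →ₗ[F] F)) := by
      simp [Set.insert_subset_iff]
    simpa using Submodule.span_le.2 hgens h
  · rintro ⟨h0, h1⟩
    have ha : a = a 2 • ![0, 0, 1, 0, 0, 0] + a 3 • ![0, 0, 0, 1, 0, 0] +
        a 4 • ![0, 0, 0, 0, 1, 0] + a 5 • ![0, 0, 0, 0, 0, 1] := by
      ext i; fin_cases i <;> simp [h0, h1]
    rw [ha]
    refine add_mem (add_mem (add_mem ?_ ?_) ?_) ?_ <;>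
      exact Submodule.smul_mem _ _ (Submodule.subset_span (by simp))

abbrev WebIndex (F : Type) := (F × F × F) ⊕ (F × F) ⊕ F ⊕ Unit

/-- The vectors of the web whose first nonzero coordinate is `1`: one on each of its conics. -/
def webRep : WebIndex F → Fin 6 → F
  | .inl (y, z, w) => ![0, 0, 1, y, z, w]
  | .inr (.inl (z, w)) => ![0, 0, 0, 1, z, w]
  | .inr (.inr (.inl w)) => ![0, 0, 0, 0, 1, w]
  | .inr (.inr (.inr _)) => ![0, 0, 0, 0, 0, 1]

lemma webRep_zero_one (i : WebIndex F) : webRep i 0 = 0 ∧ webRep i 1 = 0 := by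
  rcases i with _ | _ | _ | _ <;> simp [webRep]

lemma webRep_ne_zero (i : WebIndex F) : webRep i ≠ 0 := by
  rcases i with _ | _ | _ | _ <;> simp [webRep, funext_iff, Fin.forall_fin_succ]

lemma eq_of_smul_webRep_eq {i j : WebIndex F} {t : F} (h : t • webRep i = webRep j) : i = j := by
  rcases i with ⟨_, _, _⟩ | ⟨_, _⟩ | _ | _ <;> rcases j with ⟨_, _, _⟩ | ⟨_, _⟩ | _ | _ <;>
    aesop (add norm simp [webRep, funext_iff, Fin.forall_fin_succ])

lemma exists_eq_smul_webRep {a : Fin 6 → F} (h0 : a 0 = 0) (h1 : a 1 = 0) :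
    ∃ (i : WebIndex F) (t : F), a = t • webRep i := by
  have ha : a = ![0, 0, a 2, a 3, a 4, a 5] := by
    ext k; fin_cases k <;> simp [h0, h1]
  by_cases h2 : a 2 = 0
  · by_cases h3 : a 3 = 0
    · by_cases h4 : a 4 = 0
      · refine ⟨(.inr (.inr (.inr ())) : WebIndex F), a 5, ?_⟩
        rw [ha]; simp [webRep, h2, h3, h4]
      · refine ⟨.inr (.inr (.inl (a 5 / a 4))), a 4, ?_⟩
        rw [ha]; simp [webRep, h2, h3, h4, mul_div_cancel₀]
    · refine ⟨.inr (.inl (a 4 / a 3, a 5 / a 3)), a 3, ?_⟩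
      rw [ha]; simp [webRep, h2, h3, mul_div_cancel₀]
  · refine ⟨.inl (a 3 / a 2, a 4 / a 2, a 5 / a 2), a 2, ?_⟩
    rw [ha]; simp [webRep, h2, mul_div_cancel₀]

lemma existsUnique_eq_smul_webRep {a : Fin 6 → F} (h0 : a 0 = 0) (h1 : a 1 = 0) (ha : a ≠ 0) :
    ∃! i : WebIndex F, ∃ t : F, a = t • webRep i := by
  obtain ⟨i, t, rfl⟩ := exists_eq_smul_webRep h0 h1
  refine ⟨i, ⟨t, rfl⟩, fun j ⟨s, hs⟩ => (eq_of_smul_webRep_eq (t := s⁻¹ * t) ?_).symm⟩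
  have hs0 : s ≠ 0 := left_ne_zero_of_smul (hs ▸ ha)
  rw [mul_smul, hs, inv_smul_smul₀ hs0]

lemma numConics_span_o6 (τ : ConicType) :
    numConics (Submodule.span F ({![0, 0, 1, 0, 0, 0], ![0, 0, 0, 1, 0, 0],
      ![0, 0, 0, 0, 1, 0], ![0, 0, 0, 0, 0, 1]} : Set (Fin 6 → F))) τ.Holds =
      Nat.card {i : WebIndex F // conicType (webRep i) = τ} := by
  rw [numConics_congr _ fun a _ ha => holds_iff_conicType_eq ha τ]
  refine numConics_eq_card _ (fun t a ht => by rw [conicType_smul ht]) webRep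
    (fun i => ⟨(mem_span_o6_iff _).2 (webRep_zero_one i), webRep_ne_zero i⟩) fun a ha ha0 => ?_
  obtain ⟨h0, h1⟩ := (mem_span_o6_iff a).1 ha
  exact existsUnique_eq_smul_webRep h0 h1 ha0

lemma conicType_webRep_inl_eq_iff (p : F × F × F) (τ : ConicType) :
    conicType (webRep (.inl p)) = τ ↔ p.1 = 0 ∧ τ = .realPair ∨ p.1 ≠ 0 ∧ τ = .nonsingular := by
  obtain ⟨y, z, w⟩ := p
  by_cases hy : y = 0
  · subst hy
    have : webRep (.inl (0, z, w)) = mulLin ![0, 0, 1] ![1, z, w] := by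
      ext k; fin_cases k <;> simp [webRep, mulLin]
    rw [this, conicType_mulLin_of_cross_ne_zero (by simp [funext_iff, Fin.forall_fin_succ,
      cross_apply])]
    simp [eq_comm]
  · rw [conicType_eq_nonsingular_iff.2 (by simpa [disc, webRep] using hy)]
    simp [hy, eq_comm]

lemma webRep_inr_inl_vieta (r t : F) :
    webRep (.inr (.inl (vieta s(r, t)))) = mulLin ![0, 1, r] ![0, 1, t] := by
  ext k; fin_cases k <;> simp [webRep, mulLin, add_comm]

lemma conicType_webRep_vieta_eq_iff (s : Sym2 F) (τ : ConicType) :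
    conicType (webRep (.inr (.inl (vieta s)))) = τ ↔
      s.IsDiag ∧ τ = .doubleLine ∨ ¬ s.IsDiag ∧ τ = .realPair := by
  induction s using Sym2.ind with | _ r t => ?_
  have hcross : ![0, 1, r] ⨯₃ ![0, 1, t] = 0 ↔ r = t := by
    simp [funext_iff, Fin.forall_fin_succ, cross_apply, sub_eq_zero, eq_comm]
  rw [webRep_inr_inl_vieta, Sym2.mk_isDiag_iff]
  by_cases hrt : r = t
  · rw [conicType_mulLin_of_cross_eq_zero (hcross.2 hrt)]
    simp [hrt, eq_comm]
  · rw [conicType_mulLin_of_cross_ne_zero (hcross.not.2 hrt)]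
    simp [hrt, eq_comm]

lemma conicType_webRep_inr_inr_inl (w : F) :
    conicType (webRep (.inr (.inr (.inl w)))) = .realPair := by
  have : webRep (.inr (.inr (.inl w))) = mulLin ![0, 0, 1] ![0, 1, w] := by
    ext k; fin_cases k <;> simp [webRep, mulLin]
  rw [this]
  exact conicType_mulLin_of_cross_ne_zero (by simp [funext_iff, Fin.forall_fin_succ, cross_apply])

lemma conicType_webRep_inr_inr_inr (u : Unit) :
    conicType (webRep (F := F) (.inr (.inr (.inr u)))) = .doubleLine := by
  have : webRep (F := F) (.inr (.inr (.inr u))) = mulLin ![0, 0, 1] ![0, 0, 1] := by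
    ext k; fin_cases k <;> simp [webRep, mulLin]
  exact this ▸ conicType_mulLin_of_cross_eq_zero (cross_self _)

lemma isProduct_webRep_inr_inl_iff (p : F × F) :
    IsProduct (webRep (.inr (.inl p))) ↔ p ∈ Set.range vieta := by
  constructor
  · rintro ⟨b, c, h⟩
    have e3 : 1 = b 1 * c 1 := congrFun h 3
    have e4 : p.1 = b 1 * c 2 + b 2 * c 1 := congrFun h 4
    have e5 : p.2 = b 2 * c 2 := congrFun h 5
    have hb1 : b 1 ≠ 0 := left_ne_zero_of_mul_eq_one e3.symm
    have hc1 : c 1 ≠ 0 := right_ne_zero_of_mul_eq_one e3.symm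
    refine ⟨s(b 2 / b 1, c 2 / c 1), ?_⟩
    rw [vieta_mk, Prod.ext_iff, div_add_div _ _ hb1 hc1, div_mul_div_comm,
      div_eq_iff (mul_ne_zero hb1 hc1), div_eq_iff (mul_ne_zero hb1 hc1)]
    constructor
    · linear_combination -e4 + p.1 * e3
    · linear_combination -e5 + p.2 * e3
  · rintro ⟨s, rfl⟩
    induction s using Sym2.ind with | _ r t => exact ⟨_, _, webRep_inr_inl_vieta r t⟩

lemma card_webRep_inr_inl_eq_card_vieta {τ : ConicType} (hτ : τ = .doubleLine ∨ τ = .realPair) :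
    Nat.card {p : F × F // conicType (webRep (.inr (.inl p))) = τ} =
      Nat.card {s : Sym2 F // conicType (webRep (.inr (.inl (vieta s)))) = τ} := by
  refine card_subtype_comp_of_injective vieta_injective fun p hp => ?_
  rw [← isProduct_webRep_inr_inl_iff]
  rcases hτ with rfl | rfl
  exacts [(conicType_eq_doubleLine_iff.1 hp).1, (conicType_eq_realPair_iff.1 hp).1]

variable [Fintype F]

lemma card_webRep_inl_realPair :
    Nat.card {p : F × F × F // conicType (webRep (.inl p)) = .realPair} = Fintype.card F ^ 2 := by
  simp only [conicType_webRep_inl_eq_iff, and_true, reduceCtorEq, and_false, or_false]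
  rw [card_subtype_fst (fun y : F => y = 0)]
  simp [Nat.card_eq_fintype_card, sq]

lemma card_webRep_inl_nonsingular :
    Nat.card {p : F × F × F // conicType (webRep (.inl p)) = .nonsingular} =
      (Fintype.card F - 1) * Fintype.card F ^ 2 := by
  simp only [conicType_webRep_inl_eq_iff, and_true, reduceCtorEq, and_false, false_or]
  rw [card_subtype_fst (fun y : F => y ≠ 0), card_subtype_ne]
  simp [Nat.card_eq_fintype_card, sq]

lemma card_webRep_inr_inl_doubleLine :
    Nat.card {p : F × F // conicType (webRep (.inr (.inl p))) = .doubleLine} = Fintype.card F := by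
  rw [card_webRep_inr_inl_eq_card_vieta (Or.inl rfl)]
  simp [conicType_webRep_vieta_eq_iff, card_sym2_isDiag]

lemma card_webRep_inr_inl_realPair :
    Nat.card {p : F × F // conicType (webRep (.inr (.inl p))) = .realPair} =
      (Fintype.card F).choose 2 := by
  rw [card_webRep_inr_inl_eq_card_vieta (Or.inr rfl)]
  simp [conicType_webRep_vieta_eq_iff, card_sym2_not_isDiag]

lemma card_webRep_inr_inl_imagPair :
    Nat.card {p : F × F // conicType (webRep (.inr (.inl p))) = .imagPair} =
      Fintype.card F ^ 2 - (Fintype.card F + 1).choose 2 := by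
  classical
  have hiff (p : F × F) :
      conicType (webRep (.inr (.inl p))) = .imagPair ↔ p ∉ Set.range vieta := by
    rw [conicType_eq_imagPair_iff, isProduct_webRep_inr_inl_iff]
    simp [disc, webRep]
  rw [Nat.card_congr (Equiv.subtypeEquivRight hiff), card_not_mem_range vieta_injective,
    Nat.card_eq_fintype_card, Nat.card_eq_fintype_card, Sym2.card, Fintype.card_prod, sq]

lemma card_webRep_doubleLine :
    Nat.card {i : WebIndex F // conicType (webRep i) = .doubleLine} = Fintype.card F + 1 := by
  rw [card_subtype_sum, card_subtype_sum, card_subtype_sum, card_webRep_inr_inl_doubleLine]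
  simp [conicType_webRep_inl_eq_iff, conicType_webRep_inr_inr_inl, conicType_webRep_inr_inr_inr]

lemma card_webRep_realPair :
    Nat.card {i : WebIndex F // conicType (webRep i) = .realPair} =
      Fintype.card F ^ 2 + (Fintype.card F).choose 2 + Fintype.card F := by
  rw [card_subtype_sum, card_subtype_sum, card_subtype_sum, card_webRep_inl_realPair,
    card_webRep_inr_inl_realPair]
  simp [conicType_webRep_inr_inr_inl, conicType_webRep_inr_inr_inr, add_assoc]

lemma card_webRep_imagPair :
    Nat.card {i : WebIndex F // conicType (webRep i) = .imagPair} =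
      Fintype.card F ^ 2 - (Fintype.card F + 1).choose 2 := by
  rw [card_subtype_sum, card_subtype_sum, card_subtype_sum, card_webRep_inr_inl_imagPair]
  simp [conicType_webRep_inl_eq_iff, conicType_webRep_inr_inr_inl, conicType_webRep_inr_inr_inr]

lemma card_webRep_nonsingular :
    Nat.card {i : WebIndex F // conicType (webRep i) = .nonsingular} =
      (Fintype.card F - 1) * Fintype.card F ^ 2 := by
  have hmonic (p : F × F) : conicType (webRep (.inr (.inl p))) ≠ .nonsingular := by
    simp [conicType_eq_nonsingular_iff, disc, webRep]
  rw [card_subtype_sum, card_subtype_sum, card_subtype_sum, card_webRep_inl_nonsingular]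
  simp [hmonic, conicType_webRep_inr_inr_inl, conicType_webRep_inr_inr_inr]

/-- conic counts of the web `(X0X2, X1^2, X1X2, X2^2)` (line-orbit `o_6`). -/
theorem web_o6_conic_counts (F : Type) [Field F] [Fintype F] (q : ℕ)
    (hq : Fintype.card F = q) (W : Submodule F (Fin 6 → F))
    (hW : W = Submodule.span F ({![0, 0, 1, 0, 0, 0], ![0, 0, 0, 1, 0, 0],
      ![0, 0, 0, 0, 1, 0], ![0, 0, 0, 0, 0, 1]} : Set (Fin 6 → F))) :
    numConics W IsDoubleLine = q + 1 ∧
    numConics W IsRealPair = (3 * q ^ 2 + q) / 2 ∧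
    numConics W IsImagPair = (q ^ 2 - q) / 2 ∧
    numConics W IsNonsingular = q ^ 3 - q ^ 2 := by
  subst hq hW
  have hchoose := two_mul_choose_two_add (Fintype.card F)
  refine ⟨?_, ?_, ?_, ?_⟩
  · exact (numConics_span_o6 .doubleLine).trans card_webRep_doubleLine
  · rw [show IsRealPair = ConicType.realPair.Holds from rfl, numConics_span_o6,
      card_webRep_realPair]
    omega
  · rw [show IsImagPair = ConicType.imagPair.Holds from rfl, numConics_span_o6,
      card_webRep_imagPair, choose_two_succ]
    omega
  · rw [show IsNonsingular = ConicType.nonsingular.Holds from rfl, numConics_span_o6,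
      card_webRep_nonsingular, Nat.sub_one_mul]
    ring_nf

end Conics
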